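/- Let G be a finite group, N a normal subgroup with G = N ⋊ C, and suppose C is nilpotent and self-normalizing in G. Then for any X ≤ C, the number of G-conjugates of C containing X equals |C_N(X)|, and this number divides the number of G-conjugates of C, which is |N|. -/

import Mathlib

/-!
As `C` is self-normalizing and `G = NC`, the map `n ↦ nCn⁻¹` is a bijection from `N` onto the
conjugates of `C`. For `n ∈ N` and `x ∈ C` the element `x⁻¹(n⁻¹xn)` lies in `N`, so
`n⁻¹xn ∈ C` iff it lies in `N ⊓ C = ⊥`, i.e. iff `n` commutes with `x`. Hence `nCn⁻¹`
contains `X ≤ C` iff `n` centralizes `X`.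
-/

namespace Subgroup

variable {G : Type*} [Group G] {N C X : Subgroup G}

theorem mem_map_conj_iff {g x : G} :
    x ∈ C.map (MulAut.conj g).toMonoidHom ↔ g⁻¹ * x * g ∈ C := by
  rw [mem_map_equiv, MulAut.conj_symm_apply]

theorem map_conj_map_conj (a b : G) :
    (C.map (MulAut.conj b).toMonoidHom).map (MulAut.conj a).toMonoidHom =
      C.map (MulAut.conj (a * b)).toMonoidHom := by
  rw [map_map]; congr 1; ext; simp [mul_assoc]

theorem map_conj_one : C.map (MulAut.conj (1 : G)).toMonoidHom = C := by
  ext; simp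

theorem map_conj_eq_map_conj_iff {g h : G} :
    C.map (MulAut.conj g).toMonoidHom = C.map (MulAut.conj h).toMonoidHom ↔
      h⁻¹ * g ∈ normalizer (C : Set G) := by
  rw [mem_normalizer_iff_map_conj_eq,
    ← (map_injective (f := (MulAut.conj h⁻¹).toMonoidHom) (MulAut.conj h⁻¹).injective).eq_iff,
    map_conj_map_conj, map_conj_map_conj, inv_mul_cancel, map_conj_one]
  rfl

theorem injOn_map_conj (hN : N ⊓ normalizer (C : Set G) = ⊥) :
    Set.InjOn (fun n => C.map (MulAut.conj n).toMonoidHom) N := by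
  intro n hn m hm hnm
  have h : m⁻¹ * n ∈ N ⊓ normalizer (C : Set G) :=
    mem_inf.mpr ⟨mul_mem (inv_mem hm) hn, map_conj_eq_map_conj_iff.mp hnm⟩
  rw [hN, mem_bot, inv_mul_eq_one] at h
  exact h.symm

theorem setOf_exists_map_conj_eq_image [N.Normal] (hNC : N ⊔ C = ⊤) :
    {D | ∃ g, D = C.map (MulAut.conj g).toMonoidHom} =
      (fun n => C.map (MulAut.conj n).toMonoidHom) '' N := by
  ext D
  constructor
  · rintro ⟨g, rfl⟩
    obtain ⟨n, hn, c, hc, rfl⟩ := mem_sup_of_normal_left.mp (hNC ▸ mem_top g)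
    exact ⟨n, hn, map_conj_eq_map_conj_iff.mpr (by simpa using le_normalizer hc)⟩
  · rintro ⟨n, -, rfl⟩
    exact ⟨n, rfl⟩

theorem conj_mem_iff_commute [N.Normal] (hNC : N ⊓ C = ⊥) {n x : G} (hn : n ∈ N) (hx : x ∈ C) :
    n⁻¹ * x * n ∈ C ↔ Commute x n := by
  refine ⟨fun hconj => ?_, fun hcomm => by rwa [mul_assoc, hcomm.eq, inv_mul_cancel_left]⟩
  have hcomm : x⁻¹ * (n⁻¹ * x * n) ∈ N ⊓ C := by
    refine mem_inf.mpr ⟨?_, mul_mem (inv_mem hx) hconj⟩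
    simpa [mul_assoc] using mul_mem (‹N.Normal›.conj_mem n⁻¹ (inv_mem hn) x⁻¹) hn
  rw [hNC, mem_bot, inv_mul_eq_one, mul_assoc, eq_inv_mul_iff_mul_eq] at hcomm
  exact hcomm.symm

theorem le_map_conj_iff_mem_centralizer [N.Normal] (hNC : N ⊓ C = ⊥) (hX : X ≤ C) {n : G}
    (hn : n ∈ N) : X ≤ C.map (MulAut.conj n).toMonoidHom ↔ n ∈ centralizer (X : Set G) := by
  simp only [SetLike.le_def, mem_map_conj_iff, mem_centralizer_iff]
  exact forall₂_congr fun x hx => conj_mem_iff_commute hNC hn (hX hx)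

theorem setOf_exists_map_conj_and_le_eq_image [N.Normal] (hNC : N ⊔ C = ⊤) (hNC' : N ⊓ C = ⊥)
    (hX : X ≤ C) :
    {D | (∃ g, D = C.map (MulAut.conj g).toMonoidHom) ∧ X ≤ D} =
      (fun n => C.map (MulAut.conj n).toMonoidHom) ''
        (centralizer (X : Set G) ⊓ N : Subgroup G) := by
  rw [Set.ofPred_and, setOf_exists_map_conj_eq_image hNC, ← Set.image_inter_preimage, coe_inf]
  congr 1
  ext n
  exact (and_congr_right (le_map_conj_iff_mem_centralizer hNC' hX)).trans and_comm

theorem card_conjugates [N.Normal] (hNC : N ⊔ C = ⊤) (hN : N ⊓ normalizer (C : Set G) = ⊥) :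
    Nat.card {D : Subgroup G // ∃ g : G, D = C.map (MulAut.conj g).toMonoidHom} = Nat.card N :=
  (congrArg (fun s : Set (Subgroup G) => Nat.card s) (setOf_exists_map_conj_eq_image hNC)).trans
    (Nat.card_image_of_injOn (injOn_map_conj hN))

theorem card_conjugates_containing [N.Normal] (hNC : N ⊔ C = ⊤)
    (hN : N ⊓ normalizer (C : Set G) = ⊥) (hX : X ≤ C) :
    Nat.card {D : Subgroup G // (∃ g : G, D = C.map (MulAut.conj g).toMonoidHom) ∧ X ≤ D} =
      Nat.card (centralizer (X : Set G) ⊓ N : Subgroup G) := by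
  have hNC' : N ⊓ C = ⊥ := le_bot_iff.mp (hN ▸ inf_le_inf_left N le_normalizer)
  exact (congrArg (fun s : Set (Subgroup G) => Nat.card s)
    (setOf_exists_map_conj_and_le_eq_image hNC hNC' hX)).trans
    (Nat.card_image_of_injOn ((injOn_map_conj hN).mono inf_le_right))

end Subgroup

theorem stmt_2_general {G : Type*} [Group G] (N C X : Subgroup G)
    [N.Normal] (hNC : N ⊔ C = ⊤) (hNC' : N ⊓ C = ⊥)
    (hself : Subgroup.normalizer (C : Set G) = C) (hX : X ≤ C) :
    Nat.card {D : Subgroup G //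
        (∃ g : G, D = C.map (MulAut.conj g).toMonoidHom) ∧ X ≤ D} =
      Nat.card (Subgroup.centralizer (X : Set G) ⊓ N : Subgroup G) ∧
    Nat.card {D : Subgroup G //
        (∃ g : G, D = C.map (MulAut.conj g).toMonoidHom) ∧ X ≤ D} ∣
      Nat.card {D : Subgroup G // ∃ g : G, D = C.map (MulAut.conj g).toMonoidHom} ∧
    Nat.card {D : Subgroup G // ∃ g : G, D = C.map (MulAut.conj g).toMonoidHom} =
      Nat.card N := by
  have hN : N ⊓ Subgroup.normalizer (C : Set G) = ⊥ := by rwa [hself]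
  rw [Subgroup.card_conjugates_containing hNC hN hX, Subgroup.card_conjugates hNC hN]
  exact ⟨rfl, Subgroup.card_dvd_of_le inf_le_right, rfl⟩

/-- If `G = N ⋊ C` with `C` nilpotent and self-normalizing
(a Carter subgroup), and `X ≤ C`, then the number of `G`-conjugates of `C`
containing `X` equals `|C_N(X)|`, and this number divides the total number of
`G`-conjugates of `C`, which equals `|N|`. -/
theorem stmt_2 {G : Type*} [Group G] [Finite G] (N C X : Subgroup G)
    [N.Normal] (hNC : N ⊔ C = ⊤) (hNC' : N ⊓ C = ⊥)
    (hnil : Group.IsNilpotent C) (hself : Subgroup.normalizer (C : Set G) = C) (hX : X ≤ C) :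
    Nat.card {D : Subgroup G //
        (∃ g : G, D = C.map (MulAut.conj g).toMonoidHom) ∧ X ≤ D} =
      Nat.card (Subgroup.centralizer (X : Set G) ⊓ N : Subgroup G) ∧
    Nat.card {D : Subgroup G //
        (∃ g : G, D = C.map (MulAut.conj g).toMonoidHom) ∧ X ≤ D} ∣
      Nat.card {D : Subgroup G // ∃ g : G, D = C.map (MulAut.conj g).toMonoidHom} ∧
    Nat.card {D : Subgroup G // ∃ g : G, D = C.map (MulAut.conj g).toMonoidHom} =
      Nat.card N :=
  stmt_2_general N C X hNC hNC' hself hX
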